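/- arXiv:1509.02255 — 5 statements merged into one kernel-verified Lean document; each statement's English description precedes it below -/
import Mathlib

section
/- Let λ > 0, v, y, x ∈ X, ε ≥ 0 and σ ∈ [0,1). Define γ(z) := ⟨v, z - y⟩ - ε and x₊ := x - λv. If ‖λv + y - x‖² + 2λε ≤ σ²‖y - x‖², then the minimum over z ∈ X of λγ(z) + ½‖z - x‖² is attained at z = x₊ and this minimum value is at least ((1-σ²)/2)‖y - x‖². -/
open RealInnerProductSpace

theorem stmt6 {X : Type*} [NormedAddCommGroup X] [InnerProductSpace ℝ X]
    (lam : ℝ) (hlam : 0 < lam) (v y x : X) (ε σ : ℝ)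
    (hε : 0 ≤ ε) (hσ0 : 0 ≤ σ) (hσ1 : σ < 1)
    (herr : ‖lam • v + y - x‖ ^ 2 + 2 * lam * ε ≤ σ ^ 2 * ‖y - x‖ ^ 2) :
    IsMinOn (fun z => lam * (⟪v, z - y⟫ - ε) + ‖z - x‖ ^ 2 / 2) Set.univ (x - lam • v) ∧
    (1 - σ ^ 2) / 2 * ‖y - x‖ ^ 2 ≤
      lam * (⟪v, (x - lam • v) - y⟫ - ε) + ‖(x - lam • v) - x‖ ^ 2 / 2 := by
  have hnormsmul : ‖lam • v‖ ^ 2 = lam ^ 2 * ‖v‖ ^ 2 := by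
    rw [norm_smul, mul_pow, Real.norm_eq_abs, sq_abs]
  have hxv : ⟪v, (x - lam • v) - y⟫ = ⟪v, x - y⟫ - lam * ‖v‖ ^ 2 := by
    rw [show (x - lam • v) - y = (x - y) - lam • v by abel, inner_sub_right,
      real_inner_smul_right, real_inner_self_eq_norm_sq]
  have hsimp : ‖(x - lam • v) - x‖ ^ 2 = lam ^ 2 * ‖v‖ ^ 2 := by
    rw [show (x - lam • v) - x = -(lam • v) by abel, norm_neg, hnormsmul]
  constructor
  · rw [isMinOn_iff]
    intro z _
    have hz : ⟪v, z - y⟫ = ⟪v, z - x⟫ + ⟪v, x - y⟫ := by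
      rw [← inner_add_right]; congr 1; abel
    have hexp : ‖(z - x) + lam • v‖ ^ 2
        = ‖z - x‖ ^ 2 + 2 * (lam * ⟪v, z - x⟫) + lam ^ 2 * ‖v‖ ^ 2 := by
      rw [norm_add_sq_real, real_inner_smul_right, real_inner_comm, hnormsmul]
    nlinarith [sq_nonneg ‖(z - x) + lam • v‖]
  · have herr' : ‖lam • v + y - x‖ ^ 2
        = lam ^ 2 * ‖v‖ ^ 2 - 2 * (lam * ⟪v, x - y⟫) + ‖y - x‖ ^ 2 := by
      rw [show lam • v + y - x = lam • v + (y - x) by abel, norm_add_sq_real,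
        real_inner_smul_left, hnormsmul,
        show ⟪v, y - x⟫ = -⟪v, x - y⟫ by rw [← inner_neg_right]; congr 1; abel]
      ring
    rw [hxv, hsimp]
    nlinarith [sq_nonneg ‖y - x‖]
end

section
/- Under the assumptions of the one-step HPE estimate (v ∈ A(y)+B^{[ε]}(y), ‖λv + y - x‖² + 2λε ≤ σ²‖y - x‖², x₊ = x - λv, A μ-strongly monotone with μ > 0, B maximal monotone, σ ∈ [0,1)): for every x* ∈ (A+B)⁻¹(0), (1 - θ)‖x* - x‖² ≥ ‖x* - x₊‖², where θ = (1/(2λμ) + 1/(1-σ²))⁻¹ ∈ (0,1). -/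
open RealInnerProductSpace Pointwise

def IsStronglyMonotoneOp {X : Type*} [NormedAddCommGroup X] [InnerProductSpace ℝ X]
    (μ : ℝ) (A : X → Set X) : Prop :=
  ∀ ⦃x v x' v' : X⦄, v ∈ A x → v' ∈ A x' → μ * ‖x - x'‖ ^ 2 ≤ ⟪v - v', x - x'⟫

def IsMonotoneOp {X : Type*} [NormedAddCommGroup X] [InnerProductSpace ℝ X]
    (A : X → Set X) : Prop :=
  ∀ ⦃x v x' v' : X⦄, v ∈ A x → v' ∈ A x' → 0 ≤ ⟪v - v', x - x'⟫

def IsMaximalMonotone {X : Type*} [NormedAddCommGroup X] [InnerProductSpace ℝ X]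
    (A : X → Set X) : Prop :=
  IsMonotoneOp A ∧ ∀ B : X → Set X, IsMonotoneOp B → (∀ x, A x ⊆ B x) → A = B

def enl {X : Type*} [NormedAddCommGroup X] [InnerProductSpace ℝ X]
    (T : X → Set X) (ε : ℝ) (x : X) : Set X :=
  {v : X | ∀ x' v' : X, v' ∈ T x' → -ε ≤ ⟪v - v', x - x'⟫}

private lemma aux_real (a b lam s t N W I1 I2 ε : ℝ)
    (ha : 0 < a) (hb : 0 < b) (hlam : 0 < lam) (hW : 0 ≤ W)
    (hN : 0 ≤ N) (hs : 0 ≤ s) (ht : 0 ≤ t)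
    (herr : lam ^ 2 * W + 2 * lam * I1 + s ^ 2 + 2 * lam * ε ≤ (1 - a) * s ^ 2)
    (hkey : 2 * lam * I2 ≤ -(b * t ^ 2) + 2 * lam * ε)
    (htri : N ≤ t + s) :
    N ^ 2 + 2 * lam * (I2 + I1) + lam ^ 2 * W ≤ (1 - (1 / b + 1 / a)⁻¹) * N ^ 2 := by
  have hsum : (0 : ℝ) < 1 / b + 1 / a := by positivity
  have hθpos : 0 < (1 / b + 1 / a)⁻¹ := by positivity
  have hCS : (1 / b + 1 / a)⁻¹ * N ^ 2 ≤ a * s ^ 2 + b * t ^ 2 := by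
    have h1 : N ^ 2 ≤ (t + s) ^ 2 := by nlinarith
    have h2 : (t + s) ^ 2 ≤ (1 / b + 1 / a) * (a * s ^ 2 + b * t ^ 2) := by
      rw [div_add_div _ _ (ne_of_gt hb) (ne_of_gt ha)]
      rw [div_mul_eq_mul_div, le_div_iff₀ (by positivity)]
      nlinarith [sq_nonneg (b * t - a * s)]
    have h3 : (1 / b + 1 / a)⁻¹ * N ^ 2 ≤
        (1 / b + 1 / a)⁻¹ * ((1 / b + 1 / a) * (a * s ^ 2 + b * t ^ 2)) :=
      mul_le_mul_of_nonneg_left (le_trans h1 h2) (le_of_lt hθpos)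
    rwa [← mul_assoc, inv_mul_cancel₀ (ne_of_gt hsum), one_mul] at h3
  nlinarith [hCS, herr, hkey]

theorem stmt10 {X : Type*} [NormedAddCommGroup X] [InnerProductSpace ℝ X]
    (σ μ lam : ℝ) (hσ0 : 0 ≤ σ) (hσ1 : σ < 1) (hμ : 0 < μ) (hlam : 0 < lam)
    (A B : X → Set X) (hA : IsStronglyMonotoneOp μ A)
    (hB : IsMaximalMonotone B)
    (x y v : X) (ε : ℝ) (hε : 0 ≤ ε)
    (hv : v ∈ A y + enl B ε y)
    (herr : ‖lam • v + y - x‖ ^ 2 + 2 * lam * ε ≤ σ ^ 2 * ‖y - x‖ ^ 2) :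
    (0 < (1 / (2 * lam * μ) + 1 / (1 - σ ^ 2))⁻¹ ∧
      (1 / (2 * lam * μ) + 1 / (1 - σ ^ 2))⁻¹ < 1) ∧
    ∀ xs : X, (0:X) ∈ A xs + B xs →
      ‖xs - (x - lam • v)‖ ^ 2 ≤
        (1 - (1 / (2 * lam * μ) + 1 / (1 - σ ^ 2))⁻¹) * ‖xs - x‖ ^ 2 := by
  have ha2 : 0 < 1 - σ ^ 2 := by nlinarith
  have hb2 : 0 < 2 * lam * μ := by positivity
  have hsum : (0:ℝ) < 1 / (2 * lam * μ) + 1 / (1 - σ ^ 2) := by positivity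
  have hsum1 : 1 < 1 / (2 * lam * μ) + 1 / (1 - σ ^ 2) := by
    have h1 : 1 ≤ 1 / (1 - σ ^ 2) := by
      rw [le_div_iff₀ ha2]; nlinarith
    have : 0 < 1 / (2 * lam * μ) := by positivity
    linarith
  refine ⟨⟨by positivity, by rw [inv_lt_one_iff₀]; right; exact hsum1⟩, ?_⟩
  intro xs hxs
  obtain ⟨p, hp, q, hq, hpq⟩ := Set.mem_add.mp hv
  obtain ⟨ps, hps, qs, hqs, hpqs⟩ := Set.mem_add.mp hxs
  have hSM : μ * ‖y - xs‖ ^ 2 ≤ ⟪p - ps, y - xs⟫ := hA hp hps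
  have hEN : -ε ≤ ⟪q - qs, y - xs⟫ := hq xs qs hqs
  have hvdec : (p - ps) + (q - qs) = v := by
    have h : p + q - (ps + qs) = v := by rw [hpq, hpqs]; abel
    rw [← h]; abel
  have hkey : μ * ‖y - xs‖ ^ 2 - ε ≤ ⟪v, y - xs⟫ := by
    have h : ⟪v, y - xs⟫ = ⟪p - ps, y - xs⟫ + ⟪q - qs, y - xs⟫ := by
      rw [← hvdec, inner_add_left]
    linarith
  have hts : ‖y - xs‖ = ‖xs - y‖ := by rw [← norm_neg]; congr 1; abel
  -- expand error bound
  have herr' : lam ^ 2 * ‖v‖ ^ 2 + 2 * lam * ⟪y - x, v⟫ + ‖y - x‖ ^ 2 + 2 * lam * ε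
      ≤ (1 - (1 - σ ^ 2)) * ‖y - x‖ ^ 2 := by
    have e : lam • v + y - x = (y - x) + lam • v := by abel
    rw [e, norm_add_sq_real, real_inner_smul_right, norm_smul, Real.norm_eq_abs,
      abs_of_pos hlam, mul_pow] at herr
    nlinarith [herr]
  -- key inner product bound
  have hkey2 : 2 * lam * ⟪xs - y, v⟫ ≤ -((2 * lam * μ) * ‖xs - y‖ ^ 2) + 2 * lam * ε := by
    have h1 : ⟪v, y - xs⟫ = -⟪xs - y, v⟫ := by
      rw [real_inner_comm, show y - xs = -(xs - y) from by abel, inner_neg_left]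
    rw [h1, hts] at hkey
    nlinarith [hkey]
  have hgoal : ‖xs - (x - lam • v)‖ ^ 2
      = ‖xs - x‖ ^ 2 + 2 * lam * (⟪xs - y, v⟫ + ⟪y - x, v⟫) + lam ^ 2 * ‖v‖ ^ 2 := by
    have e : xs - (x - lam • v) = (xs - x) + lam • v := by abel
    rw [e, norm_add_sq_real, real_inner_smul_right, norm_smul, Real.norm_eq_abs,
      abs_of_pos hlam, mul_pow]
    have h : ⟪xs - x, v⟫ = ⟪xs - y, v⟫ + ⟪y - x, v⟫ := by
      rw [← inner_add_left, show xs - y + (y - x) = xs - x from by abel]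
    rw [h]; ring
  have htri : ‖xs - x‖ ≤ ‖xs - y‖ + ‖y - x‖ := by
    calc ‖xs - x‖ = ‖(xs - y) + (y - x)‖ := by congr 1; abel
      _ ≤ ‖xs - y‖ + ‖y - x‖ := norm_add_le _ _
  rw [hgoal]
  exact aux_real (1 - σ ^ 2) (2 * lam * μ) lam ‖y - x‖ ‖xs - y‖ ‖xs - x‖ (‖v‖ ^ 2)
    ⟪y - x, v⟫ ⟪xs - y, v⟫ ε ha2 hb2 hlam (by positivity) (norm_nonneg _)
    (norm_nonneg _) (norm_nonneg _) herr' hkey2 htri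
end

section
/- Let {x_k}, {y_k}, {v_k}, {ε_k}, {λ_k} satisfy, for all k ≥ 1: v_k ∈ A(y_k) + B^{[ε_k]}(y_k), ‖λ_k v_k + y_k - x_{k-1}‖² + 2λ_k ε_k ≤ σ²‖y_k - x_{k-1}‖², x_k = x_{k-1} - λ_k v_k, with σ ∈ [0,1), λ_k ≥ λ̲ > 0, A μ-strongly monotone (μ>0), B maximal monotone, and (A+B)⁻¹(0) ≠ ∅. Let d₀ = dist(x₀, (A+B)⁻¹(0)) and θ = (1/(2λ̲μ) + 1/(1-σ²))⁻¹. Then for every k ≥ 1: ‖v_k‖ ≤ √((1+σ)/(1-σ)) · (1-θ)^{(k-1)/2} d₀ / λ̲ and ε_k ≤ (σ²/(2(1-σ²))) · (1-θ)^{k-1} d₀² / λ̲. -/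
open RealInnerProductSpace Pointwise

lemma norm_iden {X : Type*} [NormedAddCommGroup X] [InnerProductSpace ℝ X] (u w p : X) :
    ‖u‖^2 - ‖u - w‖^2 = 2*⟪w, p + u⟫ + ‖p‖^2 - ‖w + p‖^2 := by
  simp only [norm_sub_sq_real, norm_add_sq_real, inner_add_right, real_inner_comm u w]
  ring

set_option maxHeartbeats 1000000

theorem stmt12 {X : Type*} [NormedAddCommGroup X] [InnerProductSpace ℝ X]
    [FiniteDimensional ℝ X]
    (σ μ lamlb : ℝ) (hσ0 : 0 ≤ σ) (hσ1 : σ < 1) (hμ : 0 < μ) (hlamlb : 0 < lamlb)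
    (A B : X → Set X) (hA : IsStronglyMonotoneOp μ A) (hAmax : IsMaximalMonotone A)
    (hB : IsMaximalMonotone B)
    (hsol : {xs : X | (0:X) ∈ A xs + B xs}.Nonempty)
    (x y v : ℕ → X) (ε lam : ℕ → ℝ)
    (hεnn : ∀ k, 1 ≤ k → 0 ≤ ε k)
    (hlam : ∀ k, 1 ≤ k → lamlb ≤ lam k)
    (hinc : ∀ k, 1 ≤ k → v k ∈ A (y k) + enl B (ε k) (y k))
    (herr : ∀ k, 1 ≤ k →
      ‖lam k • v k + y k - x (k - 1)‖ ^ 2 + 2 * lam k * ε k ≤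
        σ ^ 2 * ‖y k - x (k - 1)‖ ^ 2)
    (hupd : ∀ k, 1 ≤ k → x k = x (k - 1) - lam k • v k) :
    ∀ k : ℕ, 1 ≤ k →
      ‖v k‖ ≤ Real.sqrt ((1 + σ) / (1 - σ)) *
          (1 - (1 / (2 * lamlb * μ) + 1 / (1 - σ ^ 2))⁻¹) ^ (((k : ℝ) - 1) / 2) *
          Metric.infDist (x 0) {xs : X | (0:X) ∈ A xs + B xs} / lamlb ∧
      ε k ≤ σ ^ 2 / (2 * (1 - σ ^ 2)) *
          (1 - (1 / (2 * lamlb * μ) + 1 / (1 - σ ^ 2))⁻¹) ^ ((k : ℝ) - 1) *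
          Metric.infDist (x 0) {xs : X | (0:X) ∈ A xs + B xs} ^ 2 / lamlb := by
  obtain ⟨z0, hz0⟩ := hsol
  rw [Set.mem_setOf_eq, Set.mem_add] at hz0
  obtain ⟨as, has, bs, hbs, habs⟩ := hz0
  have hσ2 : σ^2 < 1 := by nlinarith
  have hα : (0:ℝ) < 1 - σ^2 := by linarith
  have hβ : (0:ℝ) < 2 * lamlb * μ := by positivity
  -- solution set is a singleton
  have hSuniq : {xs : X | (0:X) ∈ A xs + B xs} = {z0} := by
    ext z
    simp only [Set.mem_setOf_eq, Set.mem_singleton_iff]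
    constructor
    · intro hz
      rw [Set.mem_add] at hz
      obtain ⟨az, haz, bz, hbz, habz⟩ := hz
      have h1 := hA haz has
      have h2 := hB.1 hbz hbs
      have hsum : (az - as) + (bz - bs) = 0 := by
        have h3 : (az - as) + (bz - bs) = (az + bz) - (as + bs) := by abel
        rw [h3, habz, habs, sub_zero]
      have h4 : ⟪az - as, z - z0⟫ + ⟪bz - bs, z - z0⟫ = 0 := by
        rw [← inner_add_left, hsum, inner_zero_left]
      have h5 : ‖z - z0‖^2 ≤ 0 := by nlinarith
      have h6 : ‖z - z0‖ = 0 := le_antisymm (by nlinarith [norm_nonneg (z - z0)]) (norm_nonneg _)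
      rw [norm_eq_zero, sub_eq_zero] at h6
      exact h6
    · rintro rfl
      rw [Set.mem_add]
      exact ⟨as, has, bs, hbs, habs⟩
  have hdist : Metric.infDist (x 0) {xs : X | (0:X) ∈ A xs + B xs} = ‖x 0 - z0‖ := by
    rw [hSuniq, Metric.infDist_singleton, dist_eq_norm]
  set θ : ℝ := (1 / (2 * lamlb * μ) + 1 / (1 - σ ^ 2))⁻¹ with hθdef
  have hspos : (0:ℝ) < 1 / (2 * lamlb * μ) + 1 / (1 - σ ^ 2) := by positivity
  have hθpos : 0 < θ := inv_pos.mpr hspos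
  have hθ1 : θ < 1 := by
    rw [hθdef]
    apply inv_lt_one_of_one_lt₀
    have h1 : (1:ℝ) ≤ 1 / (1 - σ^2) := by
      rw [le_div_iff₀ hα]; nlinarith
    have h2 : (0:ℝ) < 1 / (2 * lamlb * μ) := by positivity
    linarith
  have hr0 : (0:ℝ) < 1 - θ := by linarith
  -- the harmonic-mean Cauchy inequality
  have cauchyθ : ∀ s t : ℝ, θ * (s + t)^2 ≤ (1 - σ^2) * s^2 + (2 * lamlb * μ) * t^2 := by
    intro s t
    have hθeq : θ = ((1 - σ^2) * (2 * lamlb * μ)) / ((1 - σ^2) + (2 * lamlb * μ)) := by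
      rw [hθdef]
      rw [div_add_div _ _ hβ.ne' hα.ne', inv_div]
      congr 1 <;> ring
    rw [hθeq, div_mul_eq_mul_div, div_le_iff₀ (by linarith)]
    nlinarith [sq_nonneg ((1 - σ^2) * s - (2 * lamlb * μ) * t)]
  clear_value θ
  -- key per-step inequality
  have hstep : ∀ j : ℕ, (1 - σ^2) * ‖y (j+1) - x j‖^2
      + 2 * lam (j+1) * μ * ‖y (j+1) - z0‖^2
      ≤ ‖x j - z0‖^2 - ‖x (j+1) - z0‖^2 := by
    intro j
    have hk : 1 ≤ j + 1 := by omega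
    have hmem := hinc (j+1) hk
    rw [Set.mem_add] at hmem
    obtain ⟨a, ha, b, hb, hab⟩ := hmem
    have hud := hupd (j+1) hk
    rw [Nat.add_sub_cancel] at hud
    have herr' := herr (j+1) hk
    rw [Nat.add_sub_cancel] at herr'
    have hεk := hεnn (j+1) hk
    have hlk : 0 < lam (j+1) := hlamlb.trans_le (hlam (j+1) hk)
    have hmono : μ * ‖y (j+1) - z0‖^2 ≤ ⟪a - as, y (j+1) - z0⟫ := hA ha has
    have henl : -(ε (j+1)) ≤ ⟪b - bs, y (j+1) - z0⟫ := hb z0 bs hbs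
    have hv : v (j+1) = (a - as) + (b - bs) := by
      have h1 : (a - as) + (b - bs) = (a + b) - (as + bs) := by abel
      rw [h1, hab, habs, sub_zero]
    have hinner : μ * ‖y (j+1) - z0‖^2 - ε (j+1) ≤ ⟪v (j+1), y (j+1) - z0⟫ := by
      rw [hv, inner_add_left]; linarith
    have hxk : x (j+1) - z0 = (x j - z0) - lam (j+1) • v (j+1) := by
      rw [hud]; abel
    have hid := norm_iden (x j - z0) (lam (j+1) • v (j+1)) (y (j+1) - x j)
    have hpq : (y (j+1) - x j) + (x j - z0) = y (j+1) - z0 := by abel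
    rw [hpq] at hid
    have hsm : ⟪lam (j+1) • v (j+1), y (j+1) - z0⟫ = lam (j+1) * ⟪v (j+1), y (j+1) - z0⟫ :=
      real_inner_smul_left _ _ _
    rw [hsm] at hid
    have hwp : lam (j+1) • v (j+1) + y (j+1) - x j
        = lam (j+1) • v (j+1) + (y (j+1) - x j) := add_sub_assoc _ _ _
    rw [hwp] at herr'
    have h2 : lam (j+1) * (μ * ‖y (j+1) - z0‖^2 - ε (j+1)) ≤
        lam (j+1) * ⟪v (j+1), y (j+1) - z0⟫ :=
      mul_le_mul_of_nonneg_left hinner hlk.le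
    rw [hxk]
    nlinarith [hid, herr', h2]
  -- per-step contraction
  have hcontr : ∀ j : ℕ, ‖x (j+1) - z0‖^2 ≤ (1 - θ) * ‖x j - z0‖^2 := by
    intro j
    have h1 := hstep j
    have h2 : ‖x j - z0‖ ≤ ‖y (j+1) - x j‖ + ‖y (j+1) - z0‖ := by
      have h3 : x j - z0 = (y (j+1) - z0) - (y (j+1) - x j) := by abel
      rw [h3]
      exact (norm_sub_le _ _).trans_eq (add_comm _ _)
    have h3 : θ * ‖x j - z0‖^2 ≤ θ * (‖y (j+1) - x j‖ + ‖y (j+1) - z0‖)^2 := by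
      apply mul_le_mul_of_nonneg_left _ hθpos.le
      nlinarith [norm_nonneg (x j - z0), norm_nonneg (y (j+1) - x j), norm_nonneg (y (j+1) - z0)]
    have h4 := cauchyθ ‖y (j+1) - x j‖ ‖y (j+1) - z0‖
    have h5 : (2 * lamlb * μ) * ‖y (j+1) - z0‖^2 ≤ 2 * lam (j+1) * μ * ‖y (j+1) - z0‖^2 := by
      have hll := hlam (j+1) (by omega)
      have h6 : 2 * lamlb * μ ≤ 2 * lam (j+1) * μ := by nlinarith
      exact mul_le_mul_of_nonneg_right h6 (sq_nonneg _)
    linarith [h1, h3, h4, h5]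
  -- geometric decay
  have hD : ∀ j : ℕ, ‖x j - z0‖^2 ≤ (1 - θ)^j * ‖x 0 - z0‖^2 := by
    intro j
    induction j with
    | zero => simp
    | succ n ih =>
      calc ‖x (n+1) - z0‖^2 ≤ (1 - θ) * ‖x n - z0‖^2 := hcontr n
        _ ≤ (1 - θ) * ((1 - θ)^n * ‖x 0 - z0‖^2) := mul_le_mul_of_nonneg_left ih hr0.le
        _ = (1 - θ)^(n+1) * ‖x 0 - z0‖^2 := by ring
  -- bound on ‖y_{k} - x_{k-1}‖²
  have hP : ∀ j : ℕ, (1 - σ^2) * ‖y (j+1) - x j‖^2 ≤ (1 - θ)^j * ‖x 0 - z0‖^2 := by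
    intro j
    have h1 := hstep j
    have h2 := hD j
    have hlk : 0 < lam (j+1) := hlamlb.trans_le (hlam (j+1) (by omega))
    have h3 : 0 ≤ 2 * lam (j+1) * μ * ‖y (j+1) - z0‖^2 := by positivity
    nlinarith [sq_nonneg ‖x (j+1) - z0‖]
  -- final bounds
  intro k hk
  obtain ⟨j, rfl⟩ : ∃ j, k = j + 1 := ⟨k - 1, (Nat.succ_pred_eq_of_pos hk).symm⟩
  have hlk : 0 < lam (j+1) := hlamlb.trans_le (hlam (j+1) hk)
  have hεk := hεnn (j+1) hk
  have herr' := herr (j+1) hk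
  rw [Nat.add_sub_cancel] at herr'
  have hwp : lam (j+1) • v (j+1) + y (j+1) - x j
      = lam (j+1) • v (j+1) + (y (j+1) - x j) := add_sub_assoc _ _ _
  rw [hwp] at herr'
  set s : ℝ := ‖y (j+1) - x j‖ with hsdef
  set d0 : ℝ := ‖x 0 - z0‖ with hd0def
  have hs0 : 0 ≤ s := norm_nonneg _
  have hd00 : 0 ≤ d0 := norm_nonneg _
  have hc2 : (0:ℝ) < (1 - θ)^j := pow_pos hr0 j
  have hPj : (1 - σ^2) * s^2 ≤ (1 - θ)^j * d0^2 := hP j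
  -- bound on lam * ‖v‖
  have hT : ‖lam (j+1) • v (j+1) + (y (j+1) - x j)‖ ≤ σ * s := by
    have h1 : ‖lam (j+1) • v (j+1) + (y (j+1) - x j)‖^2 ≤ σ^2 * s^2 := by nlinarith [hεk, hlk]
    have h2 := Real.sqrt_le_sqrt h1
    rwa [Real.sqrt_sq (norm_nonneg _), show σ^2 * s^2 = (σ*s)^2 by ring,
      Real.sqrt_sq (by positivity)] at h2
  have hvb : lamlb * ‖v (j+1)‖ ≤ (1 + σ) * s := by
    have h1 : ‖lam (j+1) • v (j+1)‖ = lam (j+1) * ‖v (j+1)‖ := by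
      rw [norm_smul, Real.norm_of_nonneg hlk.le]
    have h2 : ‖lam (j+1) • v (j+1)‖ ≤ ‖lam (j+1) • v (j+1) + (y (j+1) - x j)‖ + s := by
      calc ‖lam (j+1) • v (j+1)‖ = ‖(lam (j+1) • v (j+1) + (y (j+1) - x j)) - (y (j+1) - x j)‖ := by
            congr 1; abel
        _ ≤ ‖lam (j+1) • v (j+1) + (y (j+1) - x j)‖ + ‖y (j+1) - x j‖ := norm_sub_le _ _
    have h3 : lamlb * ‖v (j+1)‖ ≤ lam (j+1) * ‖v (j+1)‖ :=
      mul_le_mul_of_nonneg_right (hlam (j+1) hk) (norm_nonneg _)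
    linarith
  constructor
  · -- velocity bound
    rw [hdist]
    have hexp : (((j+1:ℕ):ℝ) - 1)/2 = (j:ℝ) * (1/2 : ℝ) := by push_cast; ring
    rw [hexp, Real.rpow_mul hr0.le, Real.rpow_natCast, ← Real.sqrt_eq_rpow]
    have hc1 : (0:ℝ) ≤ (1 + σ)/(1 - σ) := div_nonneg (by linarith) (by linarith)
    have hrhs : Real.sqrt ((1 + σ)/(1 - σ)) * Real.sqrt ((1 - θ)^j) * d0 / lamlb
        = Real.sqrt ((1 + σ)/(1 - σ) * ((1 - θ)^j) * d0^2 / lamlb^2) := by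
      rw [Real.sqrt_div (mul_nonneg (mul_nonneg hc1 hc2.le) (sq_nonneg d0)),
        Real.sqrt_mul (mul_nonneg hc1 hc2.le), Real.sqrt_mul hc1, Real.sqrt_sq hd00,
        Real.sqrt_sq hlamlb.le]
    rw [hrhs]
    rw [Real.le_sqrt (norm_nonneg _)
      (div_nonneg (mul_nonneg (mul_nonneg hc1 hc2.le) (sq_nonneg d0)) (sq_nonneg lamlb))]
    have hkey : ‖v (j+1)‖^2 * ((1 - σ) * lamlb^2) ≤ (1 + σ) * ((1 - θ)^j) * d0^2 := by
      have hsq : (lamlb * ‖v (j+1)‖)^2 ≤ ((1 + σ) * s)^2 := by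
        apply pow_le_pow_left₀ (by positivity) hvb
      nlinarith [hPj, hsq, hs0, hσ0, hσ1]
    have heq : (1 + σ)/(1 - σ) * ((1 - θ)^j) * d0^2 / lamlb^2
        = ((1 + σ) * ((1 - θ)^j) * d0^2) / ((1 - σ) * lamlb^2) := by
      field_simp
    rw [heq, le_div_iff₀ (mul_pos (by linarith : (0:ℝ) < 1 - σ) (pow_pos hlamlb 2))]
    linarith
  · -- epsilon bound
    rw [hdist]
    have hexp : (((j+1:ℕ):ℝ) - 1) = (j:ℝ) := by push_cast; ring
    rw [hexp, Real.rpow_natCast]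
    have hfinal : ε (j+1) * (2 * (1 - σ^2) * lamlb) ≤ σ^2 * ((1 - θ)^j) * d0^2 := by
      have h1 : 2 * lamlb * ε (j+1) ≤ 2 * lam (j+1) * ε (j+1) := by
        nlinarith [hlam (j+1) hk]
      have h2 : 2 * lam (j+1) * ε (j+1) ≤ σ^2 * s^2 := by
        nlinarith [sq_nonneg ‖lam (j+1) • v (j+1) + (y (j+1) - x j)‖]
      nlinarith [hPj, sq_nonneg σ, hα, hεk]
    have heq : σ^2 / (2 * (1 - σ^2)) * ((1 - θ)^j) * d0^2 / lamlb
        = (σ^2 * ((1 - θ)^j) * d0^2) / (2 * (1 - σ^2) * lamlb) := by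
      field_simp
    rw [heq, le_div_iff₀ (mul_pos (by nlinarith : (0:ℝ) < 2 * (1 - σ^2)) hlamlb)]
    linarith
end

section
/- Under the hypotheses of the specialized HPE method (Algorithm 1) with λ_k ≥ λ̲ > 0 and θ = (1/(2λ̲μ)+1/(1-σ²))⁻¹: for every x* ∈ (A+B)⁻¹(0) and k ≥ 1, ‖x* - x_k‖ ≤ (1-θ)^{k/2}‖x* - x₀‖. -/
open RealInnerProductSpace Pointwise

lemma aux_quad {X : Type*} [NormedAddCommGroup X] [InnerProductSpace ℝ X]
    (a b : ℝ) (ha : 0 < a) (hb : 0 < b) (p q : X) :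
    (1/a + 1/b)⁻¹ * ‖p + q‖^2 ≤ a*‖p‖^2 + b*‖q‖^2 := by
  have hs : 0 < 1/a + 1/b := by positivity
  rw [inv_mul_le_iff₀ hs]
  have h2 : ‖p+q‖^2 ≤ (‖p‖+‖q‖)^2 := by
    have := norm_add_le p q
    nlinarith [norm_nonneg (p+q), norm_nonneg p, norm_nonneg q]
  have key : (1/a + 1/b)*(a*‖p‖^2+b*‖q‖^2) - (‖p‖+‖q‖)^2
      = (a*‖p‖ - b*‖q‖)^2/(a*b) := by
    field_simp
    ring
  nlinarith [sq_nonneg (a*‖p‖ - b*‖q‖), div_nonneg (sq_nonneg (a*‖p‖ - b*‖q‖)) (le_of_lt (mul_pos ha hb))]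

set_option maxHeartbeats 1000000 in
theorem stmt13 {X : Type*} [NormedAddCommGroup X] [InnerProductSpace ℝ X]
    (σ μ lamlb : ℝ) (hσ0 : 0 ≤ σ) (hσ1 : σ < 1) (hμ : 0 < μ) (hlamlb : 0 < lamlb)
    (A B : X → Set X) (hA : IsStronglyMonotoneOp μ A) (hAmax : IsMaximalMonotone A)
    (hB : IsMaximalMonotone B)
    (x y v : ℕ → X) (ε lam : ℕ → ℝ)
    (hεnn : ∀ k, 1 ≤ k → 0 ≤ ε k)
    (hlam : ∀ k, 1 ≤ k → lamlb ≤ lam k)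
    (hinc : ∀ k, 1 ≤ k → v k ∈ A (y k) + enl B (ε k) (y k))
    (herr : ∀ k, 1 ≤ k →
      ‖lam k • v k + y k - x (k - 1)‖ ^ 2 + 2 * lam k * ε k ≤
        σ ^ 2 * ‖y k - x (k - 1)‖ ^ 2)
    (hupd : ∀ k, 1 ≤ k → x k = x (k - 1) - lam k • v k) :
    ∀ xs : X, (0:X) ∈ A xs + B xs → ∀ k : ℕ, 1 ≤ k →
      ‖xs - x k‖ ≤
        (1 - (1 / (2 * lamlb * μ) + 1 / (1 - σ ^ 2))⁻¹) ^ ((k : ℝ) / 2) *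
          ‖xs - x 0‖ := by
  intro xs hxs k hk
  set θ : ℝ := (1 / (2 * lamlb * μ) + 1 / (1 - σ ^ 2))⁻¹ with hθ
  have hσ2 : σ ^ 2 < 1 := by nlinarith
  have hb : (0:ℝ) < 1 - σ ^ 2 := by linarith
  have ha : (0:ℝ) < 2 * lamlb * μ := by positivity
  have hθpos : 0 < θ := by positivity
  have hθlt : θ < 1 := by
    rw [hθ]
    have h1 : 1 < 1 / (2 * lamlb * μ) + 1 / (1 - σ ^ 2) := by
      have : (1:ℝ) ≤ 1 / (1 - σ ^ 2) := by
        rw [le_div_iff₀ hb]; nlinarith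
      have : (0:ℝ) < 1 / (2 * lamlb * μ) := by positivity
      linarith
    exact inv_lt_one_of_one_lt₀ h1
  -- the solution decomposition
  rcases hxs with ⟨as, has, bs, hbs, habs⟩
  simp only at habs
  -- one-step contraction
  have step : ∀ k : ℕ, 1 ≤ k → ‖xs - x k‖^2 ≤ (1 - θ) * ‖xs - x (k-1)‖^2 := by
    intro k hk
    rcases hinc k hk with ⟨a, haA, b, hbB, hab⟩
    simp only at hab
    have hAin := hA haA has
    have hBin := hbB xs bs hbs
    -- inner product bound
    have hvsum : (a - as) + (b - bs) = v k := by
      rw [← hab, ← sub_zero (a + b), ← habs]; abel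
    have hv : μ * ‖y k - xs‖^2 - ε k ≤ ⟪v k, y k - xs⟫ := by
      have he : ⟪v k, y k - xs⟫ = ⟪a - as, y k - xs⟫ + ⟪b - bs, y k - xs⟫ := by
        rw [← inner_add_left, hvsum]
      rw [he]; linarith
    set t := lam k with ht
    have htpos : 0 < t := lt_of_lt_of_le hlamlb (hlam k hk)
    set u := xs - x (k-1) with hu
    set d := y k - x (k-1) with hd
    have hx : xs - x k = u + t • v k := by rw [hupd k hk, hu]; abel
    have hd2 : lam k • v k + y k - x (k-1) = t • v k + d := by rw [← ht, hd]; abel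
    have e1 : ‖xs - x k‖^2 = ‖u‖^2 + 2*(t*⟪v k, u⟫) + t^2*‖v k‖^2 := by
      rw [hx, norm_add_sq_real, real_inner_smul_right, real_inner_comm, norm_smul,
        Real.norm_eq_abs, mul_pow, sq_abs]
    have e2 : ‖t • v k + d‖^2 = t^2*‖v k‖^2 + 2*(t*⟪v k, d⟫) + ‖d‖^2 := by
      rw [norm_add_sq_real, real_inner_smul_left, norm_smul,
        Real.norm_eq_abs, mul_pow, sq_abs]
    have hdu : ⟪v k, y k - xs⟫ = ⟪v k, d⟫ - ⟪v k, u⟫ := by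
      rw [← inner_sub_right]
      congr 1
      rw [hd, hu]; abel
    have herr' : ‖t • v k + d‖^2 + 2 * t * ε k ≤ σ^2 * ‖d‖^2 := by
      have := herr k hk
      rw [hd2] at this
      exact this
    -- combine
    have hcomb : ‖xs - x k‖^2 ≤ ‖u‖^2 - 2*t*μ*‖y k - xs‖^2 - (1-σ^2)*‖d‖^2 := by
      have h2 : 2*t*(⟪v k, d⟫ - ⟪v k, u⟫) ≥ 2*t*(μ * ‖y k - xs‖^2 - ε k) := by
        rw [← hdu]
        exact mul_le_mul_of_nonneg_left hv (by linarith)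
      linarith [e1, e2, herr']
    have hquad : θ * ‖u‖^2 ≤ 2*t*μ*‖y k - xs‖^2 + (1-σ^2)*‖d‖^2 := by
      have h := aux_quad (2*lamlb*μ) (1-σ^2) ha hb (xs - y k) d
      have hpq : (xs - y k) + d = u := by rw [hd, hu]; abel
      rw [hpq, norm_sub_rev xs (y k), ← hθ] at h
      have hmono : (2*lamlb*μ)*‖y k - xs‖^2 ≤ 2*t*μ*‖y k - xs‖^2 := by
        have : 2*lamlb*μ ≤ 2*t*μ := by nlinarith [hlam k hk]
        nlinarith [sq_nonneg ‖y k - xs‖]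
      calc θ * ‖u‖^2 ≤ (2*lamlb*μ)*‖y k - xs‖^2 + (1-σ^2)*‖d‖^2 := h
        _ ≤ 2*t*μ*‖y k - xs‖^2 + (1-σ^2)*‖d‖^2 := by linarith
    linarith
  -- iterate
  have iter : ∀ n : ℕ, ‖xs - x n‖^2 ≤ (1-θ)^n * ‖xs - x 0‖^2 := by
    intro n
    induction n with
    | zero => simp
    | succ m ih =>
      have hs := step (m+1) (Nat.le_add_left 1 m)
      simp only [Nat.add_sub_cancel] at hs
      calc ‖xs - x (m+1)‖^2 ≤ (1-θ) * ‖xs - x m‖^2 := hs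
        _ ≤ (1-θ) * ((1-θ)^m * ‖xs - x 0‖^2) :=
            mul_le_mul_of_nonneg_left ih (by linarith)
        _ = (1-θ)^(m+1) * ‖xs - x 0‖^2 := by ring
  -- conclude via sqrt
  have h1θ : (0:ℝ) ≤ 1 - θ := by linarith
  have hsq := iter k
  have hrhs : ((1-θ) ^ ((k:ℝ)/2) * ‖xs - x 0‖)^2 = (1-θ)^k * ‖xs - x 0‖^2 := by
    rw [mul_pow, ← Real.rpow_natCast ((1-θ) ^ ((k:ℝ)/2)) 2, ← Real.rpow_mul h1θ]
    norm_num
  have hrpos : 0 ≤ (1-θ) ^ ((k:ℝ)/2) * ‖xs - x 0‖ :=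
    mul_nonneg (Real.rpow_nonneg h1θ _) (norm_nonneg _)
  nlinarith [norm_nonneg (xs - x k), hsq, hrhs]
end

section
/- Let σ ∈ [0,1), λ > 0, μ ≥ 0. Suppose x, y, v ∈ X and ε ≥ 0 satisfy ‖λv + y - x‖² + 2λε ≤ σ²‖y - x‖², and let x* be such that ⟨v, x* - y⟩ - ε ≤ 0 (e.g., v ∈ T^{[ε]}(y) with 0 ∈ T(x*)). Then ‖y - x*‖ ≤ ‖x - x*‖/√(1-σ²). -/
open RealInnerProductSpace

theorem stmt14 {X : Type*} [NormedAddCommGroup X] [InnerProductSpace ℝ X]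
    (σ lam μ : ℝ) (hσ0 : 0 ≤ σ) (hσ1 : σ < 1) (hlam : 0 < lam) (hμ : 0 ≤ μ)
    (x y v xs : X) (ε : ℝ) (hε : 0 ≤ ε)
    (herr : ‖lam • v + y - x‖ ^ 2 + 2 * lam * ε ≤ σ ^ 2 * ‖y - x‖ ^ 2)
    (hsol : ⟪v, xs - y⟫ - ε ≤ 0) :
    ‖y - xs‖ ≤ ‖x - xs‖ / Real.sqrt (1 - σ ^ 2) := by
  have key : (1 - σ^2) * ‖y - xs‖^2 ≤ ‖x - xs‖^2 := by

    rcases eq_or_lt_of_le hσ0 with hσ | hσ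
    · -- σ = 0
      have hσ2 : σ = 0 := hσ.symm
      subst hσ2
      have hL : ‖lam • v + y - x‖ ^ 2 ≤ 0 := by nlinarith
      have hv : lam • v + y - x = 0 := by
        have h0 : ‖lam • v + y - x‖ ^ 2 = 0 := le_antisymm hL (by positivity)
        have := pow_eq_zero_iff (n := 2) (by norm_num) |>.mp h0
        exact norm_eq_zero.mp this
      have hε0 : ε = 0 := by nlinarith [sq_nonneg ‖lam • v + y - x‖]
      have hlv : lam • v = x - y := by
        have : lam • v + y - x = lam • v - (x - y) := by abel
        rw [this, sub_eq_zero] at hv; exact hv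
      have hxy : ⟪x - y, xs - y⟫ ≤ 0 := by
        rw [← hlv, real_inner_smul_left]
        have : ⟪v, xs - y⟫ ≤ 0 := by rw [hε0] at hsol; linarith
        exact mul_nonpos_of_nonneg_of_nonpos hlam.le this
      have hdec : ⟪x - y, xs - y⟫ = ⟪x - xs, xs - y⟫ + ‖xs - y‖ ^ 2 := by
        have : x - y = (x - xs) + (xs - y) := by abel
        rw [this, inner_add_left, real_inner_self_eq_norm_sq]
      have hneg : ⟪x - xs, xs - y⟫ = -⟪x - xs, y - xs⟫ := by
        rw [← inner_neg_right]; congr 1; abel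
      have hcs : ⟪x - xs, y - xs⟫ ≤ ‖x - xs‖ * ‖y - xs‖ := real_inner_le_norm _ _
      have hn : ‖xs - y‖ = ‖y - xs‖ := norm_sub_rev _ _
      rw [hn] at hdec
      nlinarith [norm_nonneg (y - xs), norm_nonneg (x - xs)]
    · -- σ > 0
      have hs1 : (0:ℝ) ≤ 1 - σ^2 := by nlinarith
      have h3 : (0:ℝ) ≤ ‖lam • v + (1 - σ^2) • (y - xs) - (x - xs)‖^2 := by positivity
      have hC2 : (0:ℝ) ≤ lam * (⟪v, y - xs⟫ + ε) := by
        apply mul_nonneg hlam.le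
        have : ⟪v, y - xs⟫ = -⟪v, xs - y⟫ := by
          rw [← inner_neg_right]; congr 1; abel
        linarith
      have hle : (0:ℝ) ≤ lam * ε * (1 - σ^2) :=
        mul_nonneg (mul_nonneg hlam.le hε) hs1
      have e1 : ‖lam • v + y - x‖ ^ 2 = ⟪lam • v + y - x, lam • v + y - x⟫ :=
        (real_inner_self_eq_norm_sq _).symm
      have e2 : ‖y - x‖ ^ 2 = ⟪y - x, y - x⟫ := (real_inner_self_eq_norm_sq _).symm
      have e3 : ‖y - xs‖ ^ 2 = ⟪y - xs, y - xs⟫ := (real_inner_self_eq_norm_sq _).symm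
      have e4 : ‖x - xs‖ ^ 2 = ⟪x - xs, x - xs⟫ := (real_inner_self_eq_norm_sq _).symm
      have e5 : ‖lam • v + (1 - σ^2) • (y - xs) - (x - xs)‖^2
          = ⟪lam • v + (1 - σ^2) • (y - xs) - (x - xs),
             lam • v + (1 - σ^2) • (y - xs) - (x - xs)⟫ :=
        (real_inner_self_eq_norm_sq _).symm
      rw [e1, e2] at herr
      rw [e5] at h3
      rw [e3, e4]
      simp only [inner_sub_left, inner_sub_right, inner_add_left, inner_add_right,
        real_inner_smul_left, real_inner_smul_right, real_inner_comm v x,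
        real_inner_comm v y, real_inner_comm v xs, real_inner_comm x y,
        real_inner_comm x xs, real_inner_comm y xs] at herr h3 hC2 ⊢
      have hσ2 : 0 < σ^2 := by positivity
      nlinarith [mul_nonneg hσ2.le hC2, h3, herr, hle]

  have hs : (0:ℝ) < 1 - σ^2 := by nlinarith
  have h4 : ‖y - xs‖^2 ≤ ‖x - xs‖^2 / (1 - σ^2) := by
    rw [le_div_iff₀ hs]; linarith
  calc ‖y - xs‖ = Real.sqrt (‖y - xs‖^2) := (Real.sqrt_sq (norm_nonneg _)).symm
    _ ≤ Real.sqrt (‖x - xs‖^2 / (1 - σ^2)) := Real.sqrt_le_sqrt h4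
    _ = ‖x - xs‖ / Real.sqrt (1 - σ^2) := by
        rw [Real.sqrt_div (sq_nonneg _), Real.sqrt_sq (norm_nonneg _)]
end
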